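/- Let V ⊆ ℝ^n be a linear subspace with orthogonal projection P_V, let λ > 0, and let v ∈ ℝ^n. Then the function x ↦ λ‖x‖₂ + (1/2)‖x − v‖₂² has a unique minimizer over V, and this minimizer equals the vectorial soft-thresholding of P_V v: it is (1 − λ/‖P_V v‖₂) P_V v if ‖P_V v‖₂ > λ, and 0 if ‖P_V v‖₂ ≤ λ. -/

import Mathlib

open RealInnerProductSpace

/-- Key prox lemma: the soft-thresholding point minimizes
`lam*‖x‖ + ½‖x-p‖²` with a ½-strong-convexity margin. -/
lemma soft_key {E : Type*} [NormedAddCommGroup E] [InnerProductSpace ℝ E]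
    (lam : ℝ) (hlam : 0 < lam) (p x : E) :
    lam * ‖(if lam < ‖p‖ then (1 - lam / ‖p‖) • p else 0 : E)‖ +
      1 / 2 * ‖(if lam < ‖p‖ then (1 - lam / ‖p‖) • p else 0 : E) - p‖ ^ 2 +
      1 / 2 * ‖x - (if lam < ‖p‖ then (1 - lam / ‖p‖) • p else 0 : E)‖ ^ 2 ≤
    lam * ‖x‖ + 1 / 2 * ‖x - p‖ ^ 2 := by
  have hcs : ⟪x, p⟫ ≤ ‖x‖ * ‖p‖ := real_inner_le_norm x p
  have hxp : ‖x - p‖ ^ 2 = ‖x‖ ^ 2 - 2 * ⟪x, p⟫ + ‖p‖ ^ 2 := norm_sub_sq_real x p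
  have hx0 : (0 : ℝ) ≤ ‖x‖ := norm_nonneg x
  by_cases h : lam < ‖p‖
  · simp only [if_pos h]
    set t : ℝ := 1 - lam / ‖p‖ with ht
    have hp0 : (0 : ℝ) < ‖p‖ := lt_trans hlam h
    have ht0 : 0 ≤ t := by
      have h1 : lam / ‖p‖ < 1 := (div_lt_one hp0).2 h
      rw [ht]; linarith
    have hnt : ‖t • p‖ = t * ‖p‖ := by
      rw [norm_smul, Real.norm_eq_abs, abs_of_nonneg ht0]
    have h1 : ‖t • p - p‖ ^ 2 = (1 - t) ^ 2 * ‖p‖ ^ 2 := by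
      have h' : t • p - p = (t - 1) • p := by module
      rw [h', norm_smul, Real.norm_eq_abs, mul_pow, sq_abs]
      ring_nf
    have h2 : ‖x - t • p‖ ^ 2 = ‖x‖ ^ 2 - 2 * t * ⟪x, p⟫ + t ^ 2 * ‖p‖ ^ 2 := by
      rw [norm_sub_sq_real, real_inner_smul_right, norm_smul, Real.norm_eq_abs,
        abs_of_nonneg ht0, mul_pow]
      ring
    rw [hnt, h1, h2, hxp]
    have htv : t * ‖p‖ = ‖p‖ - lam := by
      rw [ht, sub_mul, div_mul_cancel₀ _ hp0.ne']; ring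
    have hin : (1 - t) * ⟪x, p⟫ ≤ lam * ‖x‖ := by
      have h1t : 1 - t = lam / ‖p‖ := by simp [ht]
      rw [h1t]
      rw [div_mul_eq_mul_div, div_le_iff₀ hp0]
      calc lam * ⟪x, p⟫ ≤ lam * (‖x‖ * ‖p‖) := by
            exact mul_le_mul_of_nonneg_left hcs (le_of_lt hlam)
        _ = lam * ‖x‖ * ‖p‖ := by ring
    have ht1 : (1 - t) * ‖p‖ = lam := by
      rw [ht, sub_sub_cancel, div_mul_cancel₀ _ hp0.ne']
    have hprod : (1 - t) * ‖p‖ * (t * ‖p‖) = lam * (‖p‖ - lam) := by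
      rw [ht1, htv]
    have h5 : lam * (t * ‖p‖) = lam * (‖p‖ - lam) := by rw [htv]
    clear_value t
    clear ht
    nlinarith [hprod, hin, h5]
  · simp only [if_neg h]
    push_neg at h
    have : ⟪x, p⟫ ≤ lam * ‖x‖ := by
      calc ⟪x, p⟫ ≤ ‖x‖ * ‖p‖ := hcs
        _ ≤ ‖x‖ * lam := mul_le_mul_of_nonneg_left h hx0
        _ = lam * ‖x‖ := mul_comm _ _
    simp only [norm_zero, zero_sub, norm_neg, sub_zero]
    nlinarith

/-- over a linear subspace `V` of ℝⁿ, the function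
`x ↦ λ‖x‖₂ + (1/2)‖x − v‖₂²` has a unique minimizer, equal to the vectorial
soft-thresholding of the orthogonal projection `P_V v`: it is
`(1 − λ/‖P_V v‖₂) P_V v` if `‖P_V v‖₂ > λ`, and `0` if `‖P_V v‖₂ ≤ λ`. -/
theorem soft_thresholding_on_subspace {n : ℕ}
    (V : Submodule ℝ (EuclideanSpace ℝ (Fin n)))
    (lam : ℝ) (hlam : 0 < lam) (v : EuclideanSpace ℝ (Fin n)) :
    ∃ xs : EuclideanSpace ℝ (Fin n),
      xs = (if lam < ‖(V.orthogonalProjection v : EuclideanSpace ℝ (Fin n))‖ then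
              (1 - lam / ‖(V.orthogonalProjection v : EuclideanSpace ℝ (Fin n))‖) •
                (V.orthogonalProjection v : EuclideanSpace ℝ (Fin n))
            else 0) ∧
      xs ∈ V ∧
      (∀ x ∈ V, lam * ‖xs‖ + 1 / 2 * ‖xs - v‖ ^ 2 ≤ lam * ‖x‖ + 1 / 2 * ‖x - v‖ ^ 2) ∧
      (∀ y ∈ V,
        (∀ x ∈ V, lam * ‖y‖ + 1 / 2 * ‖y - v‖ ^ 2 ≤ lam * ‖x‖ + 1 / 2 * ‖x - v‖ ^ 2) →
        y = xs) := by
  set p : EuclideanSpace ℝ (Fin n) := (V.orthogonalProjection v : EuclideanSpace ℝ (Fin n))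
    with hp
  set xs : EuclideanSpace ℝ (Fin n) := if lam < ‖p‖ then (1 - lam / ‖p‖) • p else 0 with hxs
  have hpV : p ∈ V := (V.orthogonalProjection v).2
  have hxsV : xs ∈ V := by
    rw [hxs]; split
    · exact V.smul_mem _ hpV
    · exact V.zero_mem
  -- orthogonal decomposition: for x ∈ V, ‖x - v‖² = ‖x - p‖² + ‖p - v‖²
  have hdec : ∀ x ∈ V, ‖x - v‖ ^ 2 = ‖x - p‖ ^ 2 + ‖p - v‖ ^ 2 := by
    intro x hx
    have horth : ⟪x - p, p - v⟫ = 0 := by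
      have h0 : ⟪v - p, x - p⟫ = 0 :=
        V.starProjection_inner_eq_zero v (x - p) (V.sub_mem hx hpV)
      have : ⟪x - p, v - p⟫ = 0 := by rwa [real_inner_comm]
      have h2 : p - v = -(v - p) := by abel
      rw [h2, inner_neg_right, this, neg_zero]
    have : x - v = (x - p) + (p - v) := by abel
    rw [this, norm_add_sq_real, horth]
    ring
  have key : ∀ x : EuclideanSpace ℝ (Fin n),
      lam * ‖xs‖ + 1 / 2 * ‖xs - p‖ ^ 2 + 1 / 2 * ‖x - xs‖ ^ 2 ≤
        lam * ‖x‖ + 1 / 2 * ‖x - p‖ ^ 2 := by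
    intro x
    rw [hxs]
    exact soft_key lam hlam p x
  refine ⟨xs, rfl, hxsV, ?_, ?_⟩
  · intro x hx
    have h1 := key x
    have h2 := hdec x hx
    have h3 := hdec xs hxsV
    have h4 : (0:ℝ) ≤ ‖x - xs‖ ^ 2 := sq_nonneg _
    nlinarith
  · intro y hy hmin
    have h1 := hmin xs hxsV
    have h2 := key y
    have h3 := hdec y hy
    have h4 := hdec xs hxsV
    have : ‖y - xs‖ ^ 2 ≤ 0 := by nlinarith
    have h0 : ‖y - xs‖ = 0 := by nlinarith [sq_nonneg ‖y - xs‖, norm_nonneg (y - xs)]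
    have := norm_eq_zero.mp h0
    exact sub_eq_zero.mp this
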